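/- arXiv:2605.03119 — 4 statements merged into one kernel-verified Lean document; each statement's English description precedes it below -/
import Mathlib

section
/- For E₆, the monoid of dominant coweights (λ₁,…,λ₆) ∈ ℕ⁶ on the coroot lattice, characterized by λ₁ − λ₂ + λ₄ − λ₅ ≡ 0 mod 3 (labels along the long row λ₁,…,λ₅ and extra node λ₆), has exactly 14 indecomposable elements. -/
set_option maxHeartbeats 1000000

/-- Membership in the monoid of dominant coroot-lattice coweights of `E₆`:
tuples `(λ₁, …, λ₆) ∈ ℕ⁶` (labels `λ₁, …, λ₅` along the long row and `λ₆` on the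
extra node) with `λ₁ - λ₂ + λ₄ - λ₅ ≡ 0 mod 3`. -/
def InE6CorootMonoid (x : Fin 6 → ℕ) : Prop :=
  ((x 0 : ℤ) - x 1 + x 3 - x 4) % 3 = 0

/-- Indecomposability in this monoid. -/
def IndecE6 (x : Fin 6 → ℕ) : Prop :=
  InE6CorootMonoid x ∧ x ≠ 0 ∧
    ¬ ∃ a b : Fin 6 → ℕ, InE6CorootMonoid a ∧ InE6CorootMonoid b ∧ a ≠ 0 ∧ b ≠ 0 ∧ x = a + b

lemma e6_eq_zero_iff (x : Fin 6 → ℕ) :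
    x = 0 ↔ x 0 = 0 ∧ x 1 = 0 ∧ x 2 = 0 ∧ x 3 = 0 ∧ x 4 = 0 ∧ x 5 = 0 := by
  constructor
  · rintro rfl; simp
  · rintro ⟨h0, h1, h2, h3, h4, h5⟩; funext i; fin_cases i <;> simpa

lemma e6_le_all (g x : Fin 6 → ℕ) (h0 : g 0 ≤ x 0) (h1 : g 1 ≤ x 1) (h2 : g 2 ≤ x 2)
    (h3 : g 3 ≤ x 3) (h4 : g 4 ≤ x 4) (h5 : g 5 ≤ x 5) : ∀ i, g i ≤ x i := by
  intro i; fin_cases i <;> assumption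

def e6gens : Finset (Fin 6 → ℕ) :=
  {![0,0,1,0,0,0], ![0,0,0,0,0,1], ![3,0,0,0,0,0], ![0,3,0,0,0,0], ![0,0,0,3,0,0], ![0,0,0,0,3,0], ![1,1,0,0,0,0], ![1,0,0,0,1,0], ![0,1,0,1,0,0], ![0,0,0,1,1,0], ![2,0,0,1,0,0], ![1,0,0,2,0,0], ![0,2,0,0,1,0], ![0,1,0,0,2,0]}

lemma e6_step (x g : Fin 6 → ℕ) (h : IndecE6 x) (hg : InE6CorootMonoid g)
    (hg0 : g ≠ 0) (hle : ∀ i, g i ≤ x i) : x = g := by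
  by_contra hne
  apply h.2.2
  refine ⟨g, x - g, hg, ?_, hg0, ?_, ?_⟩
  · have hx := h.1
    unfold InE6CorootMonoid at *
    have l0 := hle 0; have l1 := hle 1; have l3 := hle 3; have l4 := hle 4
    simp only [Pi.sub_apply]
    omega
  · intro hy0
    apply hne
    funext i
    have h1 := congrFun hy0 i
    simp only [Pi.sub_apply, Pi.zero_apply] at h1
    have := hle i
    omega
  · funext i
    simp only [Pi.add_apply, Pi.sub_apply]
    have := hle i
    omega

lemma indec_helper (x : Fin 6 → ℕ) (hx : InE6CorootMonoid x) (h0 : x ≠ 0)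
    (H : ∀ a b : Fin 6 → ℕ, InE6CorootMonoid a → InE6CorootMonoid b →
      x 0 = a 0 + b 0 → x 1 = a 1 + b 1 → x 2 = a 2 + b 2 → x 3 = a 3 + b 3 →
      x 4 = a 4 + b 4 → x 5 = a 5 + b 5 → a = 0 ∨ b = 0) : IndecE6 x := by
  refine ⟨hx, h0, ?_⟩
  rintro ⟨a, b, ha, hb, ha0, hb0, rfl⟩
  rcases H a b ha hb rfl rfl rfl rfl rfl rfl with h | h
  exacts [ha0 h, hb0 h]

lemma e6_forward (x : Fin 6 → ℕ) (h : IndecE6 x) : x ∈ e6gens := by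
  have hx' := h.1
  unfold InE6CorootMonoid at hx'
  have h0' : ¬ (x 0 = 0 ∧ x 1 = 0 ∧ x 2 = 0 ∧ x 3 = 0 ∧ x 4 = 0 ∧ x 5 = 0) :=
    fun hc => h.2.1 ((e6_eq_zero_iff x).2 hc)
  have D : 1 ≤ x 2 ∨ 1 ≤ x 5 ∨ 3 ≤ x 0 ∨ 3 ≤ x 1 ∨ 3 ≤ x 3 ∨ 3 ≤ x 4 ∨
      (1 ≤ x 0 ∧ 1 ≤ x 1) ∨ (1 ≤ x 0 ∧ 1 ≤ x 4) ∨ (1 ≤ x 1 ∧ 1 ≤ x 3) ∨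
      (1 ≤ x 3 ∧ 1 ≤ x 4) ∨ (2 ≤ x 0 ∧ 1 ≤ x 3) ∨ (1 ≤ x 0 ∧ 2 ≤ x 3) ∨
      (2 ≤ x 1 ∧ 1 ≤ x 4) ∨ (1 ≤ x 1 ∧ 2 ≤ x 4) := by omega
  have key : ∀ g : Fin 6 → ℕ, InE6CorootMonoid g → g ≠ 0 → (∀ i, g i ≤ x i) →
      g ∈ e6gens → x ∈ e6gens := fun g hg hg0 hle hmem => (e6_step x g h hg hg0 hle) ▸ hmem
  rcases D with h1 | h1 | h1 | h1 | h1 | h1 | h1 | h1 | h1 | h1 | h1 | h1 | h1 | h1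
  · exact key ![0,0,1,0,0,0] (by unfold InE6CorootMonoid; decide) (by decide)
      (e6_le_all _ _ (Nat.zero_le _) (Nat.zero_le _) (h1) (Nat.zero_le _) (Nat.zero_le _) (Nat.zero_le _)) (by decide)
  · exact key ![0,0,0,0,0,1] (by unfold InE6CorootMonoid; decide) (by decide)
      (e6_le_all _ _ (Nat.zero_le _) (Nat.zero_le _) (Nat.zero_le _) (Nat.zero_le _) (Nat.zero_le _) (h1)) (by decide)
  · exact key ![3,0,0,0,0,0] (by unfold InE6CorootMonoid; decide) (by decide)
      (e6_le_all _ _ (h1) (Nat.zero_le _) (Nat.zero_le _) (Nat.zero_le _) (Nat.zero_le _) (Nat.zero_le _)) (by decide)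
  · exact key ![0,3,0,0,0,0] (by unfold InE6CorootMonoid; decide) (by decide)
      (e6_le_all _ _ (Nat.zero_le _) (h1) (Nat.zero_le _) (Nat.zero_le _) (Nat.zero_le _) (Nat.zero_le _)) (by decide)
  · exact key ![0,0,0,3,0,0] (by unfold InE6CorootMonoid; decide) (by decide)
      (e6_le_all _ _ (Nat.zero_le _) (Nat.zero_le _) (Nat.zero_le _) (h1) (Nat.zero_le _) (Nat.zero_le _)) (by decide)
  · exact key ![0,0,0,0,3,0] (by unfold InE6CorootMonoid; decide) (by decide)
      (e6_le_all _ _ (Nat.zero_le _) (Nat.zero_le _) (Nat.zero_le _) (Nat.zero_le _) (h1) (Nat.zero_le _)) (by decide)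
  · exact key ![1,1,0,0,0,0] (by unfold InE6CorootMonoid; decide) (by decide)
      (e6_le_all _ _ (h1.1) (h1.2) (Nat.zero_le _) (Nat.zero_le _) (Nat.zero_le _) (Nat.zero_le _)) (by decide)
  · exact key ![1,0,0,0,1,0] (by unfold InE6CorootMonoid; decide) (by decide)
      (e6_le_all _ _ (h1.1) (Nat.zero_le _) (Nat.zero_le _) (Nat.zero_le _) (h1.2) (Nat.zero_le _)) (by decide)
  · exact key ![0,1,0,1,0,0] (by unfold InE6CorootMonoid; decide) (by decide)
      (e6_le_all _ _ (Nat.zero_le _) (h1.1) (Nat.zero_le _) (h1.2) (Nat.zero_le _) (Nat.zero_le _)) (by decide)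
  · exact key ![0,0,0,1,1,0] (by unfold InE6CorootMonoid; decide) (by decide)
      (e6_le_all _ _ (Nat.zero_le _) (Nat.zero_le _) (Nat.zero_le _) (h1.1) (h1.2) (Nat.zero_le _)) (by decide)
  · exact key ![2,0,0,1,0,0] (by unfold InE6CorootMonoid; decide) (by decide)
      (e6_le_all _ _ (h1.1) (Nat.zero_le _) (Nat.zero_le _) (h1.2) (Nat.zero_le _) (Nat.zero_le _)) (by decide)
  · exact key ![1,0,0,2,0,0] (by unfold InE6CorootMonoid; decide) (by decide)
      (e6_le_all _ _ (h1.1) (Nat.zero_le _) (Nat.zero_le _) (h1.2) (Nat.zero_le _) (Nat.zero_le _)) (by decide)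
  · exact key ![0,2,0,0,1,0] (by unfold InE6CorootMonoid; decide) (by decide)
      (e6_le_all _ _ (Nat.zero_le _) (h1.1) (Nat.zero_le _) (Nat.zero_le _) (h1.2) (Nat.zero_le _)) (by decide)
  · exact key ![0,1,0,0,2,0] (by unfold InE6CorootMonoid; decide) (by decide)
      (e6_le_all _ _ (Nat.zero_le _) (h1.1) (Nat.zero_le _) (Nat.zero_le _) (h1.2) (Nat.zero_le _)) (by decide)

lemma e6_backward (x : Fin 6 → ℕ) (h : x ∈ e6gens) : IndecE6 x := by
  simp only [e6gens, Finset.mem_insert, Finset.mem_singleton] at h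
  rcases h with rfl|rfl|rfl|rfl|rfl|rfl|rfl|rfl|rfl|rfl|rfl|rfl|rfl|rfl
  · refine indec_helper _ (by unfold InE6CorootMonoid; decide) (by decide) ?_
    intro a b ha hb e0 e1 e2 e3 e4 e5
    have f0 : (0:ℕ) = a 0 + b 0 := e0
    have f1 : (0:ℕ) = a 1 + b 1 := e1
    have f2 : (1:ℕ) = a 2 + b 2 := e2
    have f3 : (0:ℕ) = a 3 + b 3 := e3
    have f4 : (0:ℕ) = a 4 + b 4 := e4
    have f5 : (0:ℕ) = a 5 + b 5 := e5
    unfold InE6CorootMonoid at ha hb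
    rw [e6_eq_zero_iff, e6_eq_zero_iff]
    omega
  · refine indec_helper _ (by unfold InE6CorootMonoid; decide) (by decide) ?_
    intro a b ha hb e0 e1 e2 e3 e4 e5
    have f0 : (0:ℕ) = a 0 + b 0 := e0
    have f1 : (0:ℕ) = a 1 + b 1 := e1
    have f2 : (0:ℕ) = a 2 + b 2 := e2
    have f3 : (0:ℕ) = a 3 + b 3 := e3
    have f4 : (0:ℕ) = a 4 + b 4 := e4
    have f5 : (1:ℕ) = a 5 + b 5 := e5
    unfold InE6CorootMonoid at ha hb
    rw [e6_eq_zero_iff, e6_eq_zero_iff]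
    omega
  · refine indec_helper _ (by unfold InE6CorootMonoid; decide) (by decide) ?_
    intro a b ha hb e0 e1 e2 e3 e4 e5
    have f0 : (3:ℕ) = a 0 + b 0 := e0
    have f1 : (0:ℕ) = a 1 + b 1 := e1
    have f2 : (0:ℕ) = a 2 + b 2 := e2
    have f3 : (0:ℕ) = a 3 + b 3 := e3
    have f4 : (0:ℕ) = a 4 + b 4 := e4
    have f5 : (0:ℕ) = a 5 + b 5 := e5
    unfold InE6CorootMonoid at ha hb
    rw [e6_eq_zero_iff, e6_eq_zero_iff]
    omega
  · refine indec_helper _ (by unfold InE6CorootMonoid; decide) (by decide) ?_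
    intro a b ha hb e0 e1 e2 e3 e4 e5
    have f0 : (0:ℕ) = a 0 + b 0 := e0
    have f1 : (3:ℕ) = a 1 + b 1 := e1
    have f2 : (0:ℕ) = a 2 + b 2 := e2
    have f3 : (0:ℕ) = a 3 + b 3 := e3
    have f4 : (0:ℕ) = a 4 + b 4 := e4
    have f5 : (0:ℕ) = a 5 + b 5 := e5
    unfold InE6CorootMonoid at ha hb
    rw [e6_eq_zero_iff, e6_eq_zero_iff]
    omega
  · refine indec_helper _ (by unfold InE6CorootMonoid; decide) (by decide) ?_
    intro a b ha hb e0 e1 e2 e3 e4 e5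
    have f0 : (0:ℕ) = a 0 + b 0 := e0
    have f1 : (0:ℕ) = a 1 + b 1 := e1
    have f2 : (0:ℕ) = a 2 + b 2 := e2
    have f3 : (3:ℕ) = a 3 + b 3 := e3
    have f4 : (0:ℕ) = a 4 + b 4 := e4
    have f5 : (0:ℕ) = a 5 + b 5 := e5
    unfold InE6CorootMonoid at ha hb
    rw [e6_eq_zero_iff, e6_eq_zero_iff]
    omega
  · refine indec_helper _ (by unfold InE6CorootMonoid; decide) (by decide) ?_
    intro a b ha hb e0 e1 e2 e3 e4 e5
    have f0 : (0:ℕ) = a 0 + b 0 := e0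
    have f1 : (0:ℕ) = a 1 + b 1 := e1
    have f2 : (0:ℕ) = a 2 + b 2 := e2
    have f3 : (0:ℕ) = a 3 + b 3 := e3
    have f4 : (3:ℕ) = a 4 + b 4 := e4
    have f5 : (0:ℕ) = a 5 + b 5 := e5
    unfold InE6CorootMonoid at ha hb
    rw [e6_eq_zero_iff, e6_eq_zero_iff]
    omega
  · refine indec_helper _ (by unfold InE6CorootMonoid; decide) (by decide) ?_
    intro a b ha hb e0 e1 e2 e3 e4 e5
    have f0 : (1:ℕ) = a 0 + b 0 := e0
    have f1 : (1:ℕ) = a 1 + b 1 := e1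
    have f2 : (0:ℕ) = a 2 + b 2 := e2
    have f3 : (0:ℕ) = a 3 + b 3 := e3
    have f4 : (0:ℕ) = a 4 + b 4 := e4
    have f5 : (0:ℕ) = a 5 + b 5 := e5
    unfold InE6CorootMonoid at ha hb
    rw [e6_eq_zero_iff, e6_eq_zero_iff]
    omega
  · refine indec_helper _ (by unfold InE6CorootMonoid; decide) (by decide) ?_
    intro a b ha hb e0 e1 e2 e3 e4 e5
    have f0 : (1:ℕ) = a 0 + b 0 := e0
    have f1 : (0:ℕ) = a 1 + b 1 := e1
    have f2 : (0:ℕ) = a 2 + b 2 := e2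
    have f3 : (0:ℕ) = a 3 + b 3 := e3
    have f4 : (1:ℕ) = a 4 + b 4 := e4
    have f5 : (0:ℕ) = a 5 + b 5 := e5
    unfold InE6CorootMonoid at ha hb
    rw [e6_eq_zero_iff, e6_eq_zero_iff]
    omega
  · refine indec_helper _ (by unfold InE6CorootMonoid; decide) (by decide) ?_
    intro a b ha hb e0 e1 e2 e3 e4 e5
    have f0 : (0:ℕ) = a 0 + b 0 := e0
    have f1 : (1:ℕ) = a 1 + b 1 := e1
    have f2 : (0:ℕ) = a 2 + b 2 := e2
    have f3 : (1:ℕ) = a 3 + b 3 := e3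
    have f4 : (0:ℕ) = a 4 + b 4 := e4
    have f5 : (0:ℕ) = a 5 + b 5 := e5
    unfold InE6CorootMonoid at ha hb
    rw [e6_eq_zero_iff, e6_eq_zero_iff]
    omega
  · refine indec_helper _ (by unfold InE6CorootMonoid; decide) (by decide) ?_
    intro a b ha hb e0 e1 e2 e3 e4 e5
    have f0 : (0:ℕ) = a 0 + b 0 := e0
    have f1 : (0:ℕ) = a 1 + b 1 := e1
    have f2 : (0:ℕ) = a 2 + b 2 := e2
    have f3 : (1:ℕ) = a 3 + b 3 := e3
    have f4 : (1:ℕ) = a 4 + b 4 := e4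
    have f5 : (0:ℕ) = a 5 + b 5 := e5
    unfold InE6CorootMonoid at ha hb
    rw [e6_eq_zero_iff, e6_eq_zero_iff]
    omega
  · refine indec_helper _ (by unfold InE6CorootMonoid; decide) (by decide) ?_
    intro a b ha hb e0 e1 e2 e3 e4 e5
    have f0 : (2:ℕ) = a 0 + b 0 := e0
    have f1 : (0:ℕ) = a 1 + b 1 := e1
    have f2 : (0:ℕ) = a 2 + b 2 := e2
    have f3 : (1:ℕ) = a 3 + b 3 := e3
    have f4 : (0:ℕ) = a 4 + b 4 := e4
    have f5 : (0:ℕ) = a 5 + b 5 := e5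
    unfold InE6CorootMonoid at ha hb
    rw [e6_eq_zero_iff, e6_eq_zero_iff]
    omega
  · refine indec_helper _ (by unfold InE6CorootMonoid; decide) (by decide) ?_
    intro a b ha hb e0 e1 e2 e3 e4 e5
    have f0 : (1:ℕ) = a 0 + b 0 := e0
    have f1 : (0:ℕ) = a 1 + b 1 := e1
    have f2 : (0:ℕ) = a 2 + b 2 := e2
    have f3 : (2:ℕ) = a 3 + b 3 := e3
    have f4 : (0:ℕ) = a 4 + b 4 := e4
    have f5 : (0:ℕ) = a 5 + b 5 := e5
    unfold InE6CorootMonoid at ha hb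
    rw [e6_eq_zero_iff, e6_eq_zero_iff]
    omega
  · refine indec_helper _ (by unfold InE6CorootMonoid; decide) (by decide) ?_
    intro a b ha hb e0 e1 e2 e3 e4 e5
    have f0 : (0:ℕ) = a 0 + b 0 := e0
    have f1 : (2:ℕ) = a 1 + b 1 := e1
    have f2 : (0:ℕ) = a 2 + b 2 := e2
    have f3 : (0:ℕ) = a 3 + b 3 := e3
    have f4 : (1:ℕ) = a 4 + b 4 := e4
    have f5 : (0:ℕ) = a 5 + b 5 := e5
    unfold InE6CorootMonoid at ha hb
    rw [e6_eq_zero_iff, e6_eq_zero_iff]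
    omega
  · refine indec_helper _ (by unfold InE6CorootMonoid; decide) (by decide) ?_
    intro a b ha hb e0 e1 e2 e3 e4 e5
    have f0 : (0:ℕ) = a 0 + b 0 := e0
    have f1 : (1:ℕ) = a 1 + b 1 := e1
    have f2 : (0:ℕ) = a 2 + b 2 := e2
    have f3 : (0:ℕ) = a 3 + b 3 := e3
    have f4 : (2:ℕ) = a 4 + b 4 := e4
    have f5 : (0:ℕ) = a 5 + b 5 := e5
    unfold InE6CorootMonoid at ha hb
    rw [e6_eq_zero_iff, e6_eq_zero_iff]
    omega

/-- For `E₆`, the monoid of dominant coroot-lattice coweights has exactly `14`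
indecomposable elements. -/
theorem e6_indecomposables_card : {x : Fin 6 → ℕ | IndecE6 x}.ncard = 14 := by
  have hset : {x : Fin 6 → ℕ | IndecE6 x} = ↑e6gens := by
    ext x
    exact ⟨fun hx => e6_forward x hx, fun hx => e6_backward x hx⟩
  rw [hset, Set.ncard_coe_finset]
  decide
end

section
/- For E₇, a dominant coweight (λ₁,…,λ₇) ∈ ℕ⁷ lies on the coroot lattice iff λ₄ + λ₆ + λ₇ ≡ 0 mod 2 (in the paper's labeling), and the resulting monoid has exactly 10 indecomposable elements. -/
/-- Membership in the monoid of dominant coroot-lattice coweights of `E₇`: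
tuples `(λ₁, …, λ₇) ∈ ℕ⁷` with `λ₄ + λ₆ + λ₇ ≡ 0 mod 2`
(the ℤ₂ center charge is even). -/
def InE7CorootMonoid (x : Fin 7 → ℕ) : Prop :=
  (x 3 + x 5 + x 6) % 2 = 0

/-- Indecomposability in this monoid. -/
def IndecE7 (x : Fin 7 → ℕ) : Prop :=
  InE7CorootMonoid x ∧ x ≠ 0 ∧
    ¬ ∃ a b : Fin 7 → ℕ, InE7CorootMonoid a ∧ InE7CorootMonoid b ∧ a ≠ 0 ∧ b ≠ 0 ∧ x = a + b

namespace E7Aux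

/-- An additive "weight" on coweights; on the coroot monoid an element is
indecomposable iff its weight is `2`. -/
def W (x : Fin 7 → ℕ) : ℕ := 2 * (x 0 + x 1 + x 2 + x 4) + x 3 + x 5 + x 6

lemma eq_zero_of_W {a : Fin 7 → ℕ} (h : W a = 0) : a = 0 := by
  unfold W at h
  funext i; fin_cases i <;> simp <;> omega

lemma eq_vec_iff (x : Fin 7 → ℕ) (a b c d e f g : ℕ) :
    x = ![a,b,c,d,e,f,g] ↔
      x 0 = a ∧ x 1 = b ∧ x 2 = c ∧ x 3 = d ∧ x 4 = e ∧ x 5 = f ∧ x 6 = g := by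
  constructor
  · rintro rfl
    exact ⟨rfl, rfl, rfl, rfl, rfl, rfl, rfl⟩
  · rintro ⟨h0, h1, h2, h3, h4, h5, h6⟩
    funext i; fin_cases i <;> assumption

lemma split (x v : Fin 7 → ℕ) (hx : InE7CorootMonoid x) (hv : InE7CorootMonoid v)
    (hWv : W v = 2) (hle : ∀ i, v i ≤ x i) (hW : W x ≠ 2) :
    ∃ a b, InE7CorootMonoid a ∧ InE7CorootMonoid b ∧ a ≠ 0 ∧ b ≠ 0 ∧ x = a + b := by
  unfold InE7CorootMonoid at hx hv
  refine ⟨v, fun i => x i - v i, hv, ?_, ?_, ?_, ?_⟩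
  · show (x 3 - v 3 + (x 5 - v 5) + (x 6 - v 6)) % 2 = 0
    have h3 := hle 3; have h5 := hle 5; have h6 := hle 6
    omega
  · intro h
    rw [h] at hWv
    simp [W] at hWv
  · intro h
    apply hW
    have he : ∀ i, x i = v i := by
      intro i
      have h1 := congrFun h i
      have h2 := hle i
      simp at h1
      omega
    unfold W
    rw [he 0, he 1, he 2, he 3, he 4, he 5, he 6]
    exact hWv
  · funext i
    have := hle i
    show x i = v i + (x i - v i)
    omega

lemma indec_iff (x : Fin 7 → ℕ) : IndecE7 x ↔ InE7CorootMonoid x ∧ W x = 2 := by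
  constructor
  · rintro ⟨hx, hx0, hnd⟩
    refine ⟨hx, ?_⟩
    by_contra hW
    have hWpar : W x % 2 = 0 := by
      have hx' := hx
      unfold InE7CorootMonoid at hx'; unfold W; omega
    have hW0 : W x ≠ 0 := fun h => hx0 (eq_zero_of_W h)
    have hW4 : 4 ≤ W x := by omega
    have hcases : 1 ≤ x 0 ∨ 1 ≤ x 1 ∨ 1 ≤ x 2 ∨ 1 ≤ x 4 ∨ 2 ≤ x 3 ∨ 2 ≤ x 5 ∨ 2 ≤ x 6 := by
      unfold W at hW4; omega
    apply hnd
    rcases hcases with h | h | h | h | h | h | h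
    · exact split x ![1,0,0,0,0,0,0] hx rfl rfl
        (fun i => by fin_cases i <;> first | exact Nat.zero_le _ | exact h) hW
    · exact split x ![0,1,0,0,0,0,0] hx rfl rfl
        (fun i => by fin_cases i <;> first | exact Nat.zero_le _ | exact h) hW
    · exact split x ![0,0,1,0,0,0,0] hx rfl rfl
        (fun i => by fin_cases i <;> first | exact Nat.zero_le _ | exact h) hW
    · exact split x ![0,0,0,0,1,0,0] hx rfl rfl
        (fun i => by fin_cases i <;> first | exact Nat.zero_le _ | exact h) hW
    · exact split x ![0,0,0,2,0,0,0] hx rfl rfl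
        (fun i => by fin_cases i <;> first | exact Nat.zero_le _ | exact h) hW
    · exact split x ![0,0,0,0,0,2,0] hx rfl rfl
        (fun i => by fin_cases i <;> first | exact Nat.zero_le _ | exact h) hW
    · exact split x ![0,0,0,0,0,0,2] hx rfl rfl
        (fun i => by fin_cases i <;> first | exact Nat.zero_le _ | exact h) hW
  · rintro ⟨hx, hW⟩
    refine ⟨hx, ?_, ?_⟩
    · intro h; rw [h] at hW; simp [W] at hW
    · rintro ⟨a, b, ha, hb, ha0, hb0, rfl⟩
      have hWab : W (a + b) = W a + W b := by
        simp [W, Pi.add_apply]; ring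
      unfold InE7CorootMonoid at ha hb
      have hWa : W a % 2 = 0 := by unfold W; omega
      have hWb : W b % 2 = 0 := by unfold W; omega
      have hWa0 : W a ≠ 0 := fun h => ha0 (eq_zero_of_W h)
      have hWb0 : W b ≠ 0 := fun h => hb0 (eq_zero_of_W h)
      omega

end E7Aux

open E7Aux in
/-- For `E₇`, the monoid of dominant coroot-lattice coweights (cut out by the
evenness of `λ₄ + λ₆ + λ₇`) has exactly `10` indecomposable elements. -/
theorem e7_indecomposables_card : {x : Fin 7 → ℕ | IndecE7 x}.ncard = 10 := by
  have hset : {x : Fin 7 → ℕ | IndecE7 x} =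
      ↑({![1,0,0,0,0,0,0], ![0,1,0,0,0,0,0], ![0,0,1,0,0,0,0], ![0,0,0,0,1,0,0],
         ![0,0,0,2,0,0,0], ![0,0,0,0,0,2,0], ![0,0,0,0,0,0,2],
         ![0,0,0,1,0,1,0], ![0,0,0,1,0,0,1], ![0,0,0,0,0,1,1]} : Finset (Fin 7 → ℕ)) := by
    ext x
    simp only [Set.mem_setOf_eq, indec_iff, InE7CorootMonoid, W, Finset.coe_insert,
      Set.mem_insert_iff, Finset.coe_singleton, Set.mem_singleton_iff, eq_vec_iff]
    constructor
    · rintro ⟨hx, hW⟩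
      have h1 : (x 3 = 0 ∧ x 5 = 0 ∧ x 6 = 0 ∧ x 0 + x 1 + x 2 + x 4 = 1) ∨
          (x 0 = 0 ∧ x 1 = 0 ∧ x 2 = 0 ∧ x 4 = 0 ∧ x 3 + x 5 + x 6 = 2) := by omega
      rcases h1 with ⟨h3, h5, h6, hs⟩ | ⟨h0, h1, h2, h4, hs⟩
      · have h2' : x 0 = 1 ∨ x 1 = 1 ∨ x 2 = 1 ∨ x 4 = 1 := by omega
        rcases h2' with h | h | h | h
        · exact Or.inl (by omega)
        · exact Or.inr (Or.inl (by omega))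
        · exact Or.inr (Or.inr (Or.inl (by omega)))
        · exact Or.inr (Or.inr (Or.inr (Or.inl (by omega))))
      · have h2' : x 3 = 2 ∨ x 5 = 2 ∨ x 6 = 2 ∨ (x 3 = 1 ∧ x 5 = 1) ∨
            (x 3 = 1 ∧ x 6 = 1) ∨ (x 5 = 1 ∧ x 6 = 1) := by omega
        rcases h2' with h | h | h | h | h | h
        · exact Or.inr (Or.inr (Or.inr (Or.inr (Or.inl (by omega)))))
        · exact Or.inr (Or.inr (Or.inr (Or.inr (Or.inr (Or.inl (by omega))))))
        · exact Or.inr (Or.inr (Or.inr (Or.inr (Or.inr (Or.inr (Or.inl (by omega)))))))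
        · exact Or.inr (Or.inr (Or.inr (Or.inr (Or.inr (Or.inr (Or.inr
            (Or.inl (by omega))))))))
        · exact Or.inr (Or.inr (Or.inr (Or.inr (Or.inr (Or.inr (Or.inr (Or.inr
            (Or.inl (by omega)))))))))
        · exact Or.inr (Or.inr (Or.inr (Or.inr (Or.inr (Or.inr (Or.inr (Or.inr
            (Or.inr (by omega)))))))))
    · rintro (h | h | h | h | h | h | h | h | h | h) <;> omega
  rw [hset, Set.ncard_coe_finset]
  decide
end

section
/- For D_{2n+1}, the set of triples (λ₁, λ_{n−1}, λ_n) ∈ ℕ³ satisfying λ_{n−1} − λ_n ≡ 0 mod 2 and 2(λ₁ + j(λ_{n−1}+λ_n)) − (λ_{n−1} − λ_n) ≡ 0 mod 4 (with n = 2j+1) is generated as a monoid by the six triples (0,1,1), (2,0,0), (1,0,2), (1,2,0), (0,0,4), (0,4,0). -/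
/-- For `D_{2j+1}`, the set of triples `(a, b, c) = (λ₁, λ_{n-1}, λ_n) ∈ ℕ³`
satisfying `λ_{n-1} - λ_n ≡ 0 mod 2` and
`2 (λ₁ + j (λ_{n-1} + λ_n)) - (λ_{n-1} - λ_n) ≡ 0 mod 4`
is generated as a monoid by the six triples
`(0,1,1)`, `(2,0,0)`, `(1,0,2)`, `(1,2,0)`, `(0,0,4)`, `(0,4,0)`. -/
theorem dOdd_exterior_generators (j : ℕ) (a b c : ℕ) :
    (((b : ℤ) - c) % 2 = 0 ∧
      (2 * ((a : ℤ) + (j : ℤ) * ((b : ℤ) + c)) - ((b : ℤ) - c)) % 4 = 0) ↔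
      ∃ k₁ k₂ k₃ k₄ k₅ k₆ : ℕ,
        a = 2 * k₂ + k₃ + k₄ ∧
        b = k₁ + 2 * k₄ + 4 * k₆ ∧
        c = k₁ + 2 * k₃ + 4 * k₅ := by
  constructor
  · rintro ⟨h1, h2⟩
    obtain ⟨m, hm⟩ : ∃ m : ℤ, (b : ℤ) - c = 2 * m := ⟨((b:ℤ)-c)/2, by omega⟩
    have hj : (j:ℤ) * ((b:ℤ) + c) = 2 * ((j:ℤ) * (m + c)) := by
      linear_combination (j:ℤ) * hm
    rw [hj] at h2
    by_cases hbc : c ≤ b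
    · exact ⟨c, a/2, 0, a%2, 0, (b - c - 2*(a%2))/4, by omega, by omega, by omega⟩
    · exact ⟨b, a/2, a%2, 0, (c - b - 2*(a%2))/4, 0, by omega, by omega, by omega⟩
  · rintro ⟨k₁, k₂, k₃, k₄, k₅, k₆, ha, hb, hc⟩
    subst ha hb hc
    have hj : (j:ℤ) * (((k₁ + 2 * k₄ + 4 * k₆ : ℕ) : ℤ) + ((k₁ + 2 * k₃ + 4 * k₅ : ℕ) : ℤ)) =
        2 * ((j:ℤ) * ((k₁:ℤ) + k₃ + k₄ + 2 * k₅ + 2 * k₆)) := by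
      push_cast; ring
    omega
end

section
/- In the poset of dominant coweights of a simple ADE Lie algebra (ordered by λ ≤ λ' iff λ' − λ is a nonnegative rational combination with α_i(λ'−λ) ≥ 0 for all i, restricted to coroot lattice elements), any coweight λ whose Dynkin label is nonzero on an internal node of the Dynkin diagram of valence L > 1 has at least two distinct covers from above: there exist at least two distinct positive coroots θ, θ' with λ + θ and λ + θ' dominant. -/
/-!
If a positive coroot `t` has a negative label `(C t)ₘ`, positive definiteness forces that label
to be `-1`, and then `t + αₘ` is again a positive coroot. Hence a positive coroot that is maximal,
for the componentwise order, in a family closed under such raising steps has nonnegative labels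
at the raising directions; maximal elements exist because labels of positive coroots lie in
`[-1, 2]` and `C` is injective. Taking the family of coroots vanishing at `i` gives `θ`, dominant
except for a label `≥ -1` at `i` that `λᵢ ≥ 1` absorbs; the family of coroots with positive
`i`-th coordinate gives a dominant `θ' ≠ θ`.
-/

/-- A positive coroot of a simply-laced root system with (symmetric) Cartan matrix
`C`, written in simple-coroot coordinates: a nonzero vector with nonnegative
coordinates and squared length `2` with respect to the Gram matrix `C`. -/
def IsPosCoroot {r : ℕ} (C : Matrix (Fin r) (Fin r) ℤ) (t : Fin r → ℤ) : Prop :=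
  (∀ j, 0 ≤ t j) ∧ t ≠ 0 ∧ dotProduct t (C.mulVec t) = 2

open Matrix

section QuadraticForm

variable {n R : Type*} [Fintype n] [DecidableEq n] [CommRing R] {C : Matrix n n R}

omit [DecidableEq n] in
theorem Matrix.IsSymm.dotProduct_mulVec_comm (hsym : C.IsSymm) (x y : n → R) :
    x ⬝ᵥ C *ᵥ y = y ⬝ᵥ C *ᵥ x := by
  rw [dotProduct_mulVec, ← mulVec_transpose, hsym.eq, dotProduct_comm]

theorem Matrix.IsSymm.quadForm_smul_add_smul_single (hsym : C.IsSymm) (x : n → R)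
    (a s : R) (m : n) :
    (a • x + s • Pi.single m 1) ⬝ᵥ C *ᵥ (a • x + s • Pi.single m 1) =
      a ^ 2 * (x ⬝ᵥ C *ᵥ x) + 2 * a * s * (C *ᵥ x) m + s ^ 2 * C m m := by
  have hlabel : Pi.single m 1 ⬝ᵥ C *ᵥ x = (C *ᵥ x) m := by rw [single_dotProduct, one_mul]
  have hdiag : Pi.single m 1 ⬝ᵥ C *ᵥ Pi.single m 1 = C m m := by
    rw [single_dotProduct, mulVec_single, one_mul, MulOpposite.op_one, one_smul, col_apply]
  simp only [mulVec_add, mulVec_smul, dotProduct_add, add_dotProduct, dotProduct_smul,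
    smul_dotProduct, smul_eq_mul]
  rw [hsym.dotProduct_mulVec_comm x (Pi.single m 1), hlabel, hdiag]
  ring

end QuadraticForm

variable {r : ℕ} {C : Matrix (Fin r) (Fin r) ℤ}
  (hpd : ∀ x : Fin r → ℚ, x ≠ 0 →
      0 < dotProduct x ((C.map (Int.cast : ℤ → ℚ)).mulVec x))

section PosDef

include hpd

theorem quadForm_pos_of_ne_zero {t : Fin r → ℤ} (ht : t ≠ 0) : 0 < t ⬝ᵥ C *ᵥ t := by
  have hcast : (fun m => (t m : ℚ)) ≠ 0 := fun h =>
    ht (funext fun m => by simpa using congrFun h m)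
  have key := hpd _ hcast
  have hform : (fun m => (t m : ℚ)) ⬝ᵥ (C.map (Int.cast : ℤ → ℚ)) *ᵥ (fun m => (t m : ℚ)) =
      ((t ⬝ᵥ C *ᵥ t : ℤ) : ℚ) := by
    simp [dotProduct, mulVec, Finset.mul_sum]
  rw [hform] at key
  exact_mod_cast key

theorem quadForm_nonneg (t : Fin r → ℤ) : 0 ≤ t ⬝ᵥ C *ᵥ t := by
  rcases eq_or_ne t 0 with rfl | ht
  · simp
  · exact (quadForm_pos_of_ne_zero hpd ht).le

theorem mulVec_injective_of_posDef : Function.Injective C.mulVec := by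
  intro a b hab
  by_contra hne
  have hpos := quadForm_pos_of_ne_zero hpd (sub_ne_zero.mpr hne)
  rw [mulVec_sub, hab, sub_self, dotProduct_zero] at hpos
  exact hpos.false

end PosDef

section Coroots

variable (hsym : C.IsSymm) (hdiag : ∀ m, C m m = 2)

include hdiag in
theorem isPosCoroot_single (m : Fin r) : IsPosCoroot C (Pi.single m 1) := by
  refine ⟨fun n => ?_, fun h => by simpa using congrFun h m, ?_⟩
  · rcases eq_or_ne n m with rfl | hn
    · simp
    · simp [Pi.single_eq_of_ne hn]
  · rw [single_dotProduct, mulVec_single]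
    simp [hdiag]

include hsym hdiag in
theorem quadForm_add_single (t : Fin r → ℤ) (m : Fin r) :
    (t + Pi.single m 1) ⬝ᵥ C *ᵥ (t + Pi.single m 1) = t ⬝ᵥ C *ᵥ t + 2 * (C *ᵥ t) m + 2 := by
  simpa [hdiag] using hsym.quadForm_smul_add_smul_single t 1 1 m

theorem le_add_single {ι : Type*} [DecidableEq ι] (t : ι → ℤ) (m : ι) : t ≤ t + Pi.single m 1 :=
  le_add_of_nonneg_right (Pi.single_nonneg.mpr zero_le_one)

theorem add_single_ne_zero {t : Fin r → ℤ} (ht : ∀ n, 0 ≤ t n) (m : Fin r) :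
    t + Pi.single m 1 ≠ 0 := fun h => by
  have := congrFun h m
  simp only [Pi.add_apply, Pi.single_eq_same, Pi.zero_apply] at this
  linarith [ht m]

namespace IsPosCoroot

variable {t : Fin r → ℤ} (ht : IsPosCoroot C t)
include hpd hsym hdiag ht

theorem mulVec_le_two (m : Fin r) : (C *ᵥ t) m ≤ 2 := by
  set c := (C *ᵥ t) m
  -- the form at `2 t - c eₘ` is `8 - 2 c²`
  have h := quadForm_nonneg hpd ((2 : ℤ) • t + (-c) • Pi.single m 1)
  rw [hsym.quadForm_smul_add_smul_single, ht.2.2, hdiag] at h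
  nlinarith

theorem neg_one_le_mulVec (m : Fin r) : -1 ≤ (C *ᵥ t) m := by
  have h := quadForm_pos_of_ne_zero hpd (add_single_ne_zero ht.1 m)
  rw [quadForm_add_single hsym hdiag, ht.2.2] at h
  omega

theorem add_single {m : Fin r} (hm : (C *ᵥ t) m < 0) : IsPosCoroot C (t + Pi.single m 1) := by
  have hm' : (C *ᵥ t) m = -1 := by linarith [ht.neg_one_le_mulVec hpd hsym hdiag m]
  refine ⟨fun n => ?_, add_single_ne_zero ht.1 m, ?_⟩
  · have := ht.1 n
    rcases eq_or_ne n m with rfl | hn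
    · simp only [Pi.add_apply, Pi.single_eq_same]; omega
    · simp only [Pi.add_apply, Pi.single_eq_of_ne hn]; omega
  · rw [quadForm_add_single hsym hdiag, ht.2.2, hm']
    norm_num

end IsPosCoroot

include hpd hsym hdiag in
theorem setOf_isPosCoroot_finite : {t | IsPosCoroot C t}.Finite := by
  have hbox : (Set.univ.pi fun _ : Fin r => Set.Icc (-1 : ℤ) 2).Finite :=
    Set.Finite.pi fun _ => Set.finite_Icc _ _
  refine (hbox.preimage (mulVec_injective_of_posDef hpd).injOn).subset fun t ht m _ => ?_
  exact ⟨ht.neg_one_le_mulVec hpd hsym hdiag m, ht.mulVec_le_two hpd hsym hdiag m⟩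

include hpd hsym hdiag in
theorem exists_isPosCoroot_mulVec_nonneg {S : Set (Fin r → ℤ)} (hS : ∀ t ∈ S, IsPosCoroot C t)
    (hne : S.Nonempty) {M : Set (Fin r)}
    (hclosed : ∀ t ∈ S, ∀ m ∈ M, IsPosCoroot C (t + Pi.single m 1) → t + Pi.single m 1 ∈ S) :
    ∃ t ∈ S, ∀ m ∈ M, 0 ≤ (C *ᵥ t) m := by
  obtain ⟨t, htmax⟩ := ((setOf_isPosCoroot_finite hpd hsym hdiag).subset hS).exists_maximal hne
  refine ⟨t, htmax.prop, fun m hm => ?_⟩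
  by_contra! hneg
  have hraise := hclosed t htmax.prop m hm ((hS t htmax.prop).add_single hpd hsym hdiag hneg)
  have hup := htmax.le_of_ge hraise (le_add_single t m) m
  simp at hup

end Coroots

theorem internal_node_two_covers_general {r : ℕ} (C : Matrix (Fin r) (Fin r) ℤ)
    (hdiag : ∀ i, C i i = 2)
    (hsym : C.transpose = C)
    (hpd : ∀ x : Fin r → ℚ, x ≠ 0 →
      0 < dotProduct x ((C.map (Int.cast : ℤ → ℚ)).mulVec x))
    (lam : Fin r → ℤ)
    (hdom : ∀ i, 0 ≤ lam i)
    (i j : Fin r) (hi : lam i ≠ 0)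
    (hji : j ≠ i) :
    ∃ θ θ' : Fin r → ℤ, θ ≠ θ' ∧ IsPosCoroot C θ ∧ IsPosCoroot C θ' ∧
      (∀ m, 0 ≤ lam m + C.mulVec θ m) ∧ (∀ m, 0 ≤ lam m + C.mulVec θ' m) := by
  have hlam : 1 ≤ lam i := by have := hdom i; omega
  obtain ⟨θ, ⟨hθ, hθi⟩, hθdom⟩ := exists_isPosCoroot_mulVec_nonneg hpd hsym hdiag
    (S := {t | IsPosCoroot C t ∧ t i = 0}) (M := {i}ᶜ) (fun t ht => ht.1)
    ⟨Pi.single j 1, isPosCoroot_single hdiag j, Pi.single_eq_of_ne hji.symm 1⟩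
    fun t ht m hm hpos => ⟨hpos, by simp [Pi.single_eq_of_ne (Ne.symm hm), ht.2]⟩
  obtain ⟨θ', ⟨hθ', hθ'i⟩, hθ'dom⟩ := exists_isPosCoroot_mulVec_nonneg hpd hsym hdiag
    (S := {t | IsPosCoroot C t ∧ 0 < t i}) (M := Set.univ) (fun t ht => ht.1)
    ⟨Pi.single i 1, isPosCoroot_single hdiag i, by simp⟩
    fun t ht m _ hpos => ⟨hpos, ht.2.trans_le (le_add_single t m i)⟩
  refine ⟨θ, θ', fun h => hθ'i.ne' (h ▸ hθi), hθ, hθ', fun m => ?_, fun m => ?_⟩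
  · rcases eq_or_ne m i with rfl | hm
    · linarith [hθ.neg_one_le_mulVec hpd hsym hdiag m]
    · linarith [hdom m, hθdom m hm]
  · linarith [hdom m, hθ'dom m trivial]

/-- In the poset of dominant coroot-lattice coweights of a simple ADE Lie algebra
(Dynkin-label coordinates, order componentwise), any dominant coweight `λ` whose
Dynkin label is nonzero at an internal node `i` of valence `> 1` (witnessed by two
distinct neighbours `j ≠ k` of `i`) has at least two distinct covers from above:
there exist two distinct positive coroots `θ ≠ θ'` such that `λ + θ` and `λ + θ'`
are dominant (the labels of `θ` being `C ·ᵥ θ`). -/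
theorem internal_node_two_covers {r : ℕ} (C : Matrix (Fin r) (Fin r) ℤ)
    (hdiag : ∀ i, C i i = 2)
    (hoff : ∀ i j, i ≠ j → C i j = 0 ∨ C i j = -1)
    (hsym : C.transpose = C)
    (hpd : ∀ x : Fin r → ℚ, x ≠ 0 →
      0 < dotProduct x ((C.map (Int.cast : ℤ → ℚ)).mulVec x))
    (hconn : ∀ i j : Fin r, Relation.ReflTransGen (fun a b => C a b = -1) i j)
    (lam : Fin r → ℤ)
    (hdom : ∀ i, 0 ≤ lam i)
    (hlat : ∃ v : Fin r → ℤ, C.mulVec v = lam)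
    (i j k : Fin r) (hi : lam i ≠ 0)
    (hjk : j ≠ k) (hji : j ≠ i) (hki : k ≠ i)
    (hCj : C i j = -1) (hCk : C i k = -1) :
    ∃ θ θ' : Fin r → ℤ, θ ≠ θ' ∧ IsPosCoroot C θ ∧ IsPosCoroot C θ' ∧
      (∀ m, 0 ≤ lam m + C.mulVec θ m) ∧ (∀ m, 0 ≤ lam m + C.mulVec θ' m) :=
  internal_node_two_covers_general C hdiag hsym hpd lam hdom i j hi hji
end
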